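/- arXiv:2109.12705 — 2 statements merged into one kernel-verified Lean document; each statement's English description precedes it below -/
import Mathlib

section
/- For every integer n ≥ 1, 2·Σ_{k=0}^{⌊n/2⌋} (2k+1)!·S(n,2k+1) = B(n) - (-1)^n. -/
/-!
Evaluating `x ^ n = ∑ₖ S(n, k) x (x - 1) ⋯ (x - k + 1)` at `x = -1` gives
`∑ₖ (-1) ^ k k! S(n, k) = (-1) ^ n`. Subtracting this from `B n = ∑ₖ k! S(n, k)` leaves twice the
sum over odd `k`.
-/

open Finset
open scoped Nat

/-- Stirling numbers of the second kind. -/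
def S : ℕ → ℕ → ℕ
  | 0, 0 => 1
  | 0, _ + 1 => 0
  | _ + 1, 0 => 0
  | n + 1, k + 1 => (k + 1) * S n (k + 1) + S n k

/-- Ordered Bell (Fubini) numbers. -/
def B (n : ℕ) : ℕ := ∑ k ∈ range (n + 1), k.factorial * S n k

theorem S_eq_stirlingSecond : S = Nat.stirlingSecond := by
  funext n k
  induction n generalizing k with
  | zero => cases k <;> rfl
  | succ n ih => cases k <;> simp [S, Nat.stirlingSecond_succ_succ, ih]

theorem Finset.sum_range_two_mul {M : Type*} [AddCommMonoid M] (f : ℕ → M) (m : ℕ) :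
    ∑ k ∈ range (2 * m), f k = ∑ k ∈ range m, (f (2 * k) + f (2 * k + 1)) := by
  induction m with
  | zero => simp
  | succ m ih =>
    rw [mul_add, mul_one, sum_range_succ, sum_range_succ, sum_range_succ, ih, add_assoc]

namespace Nat

open Polynomial

theorem sum_range_stirlingSecond_smul_of_lt {M : Type*} [AddCommMonoid M] {n N : ℕ} (h : n < N)
    (f : ℕ → M) :
    ∑ k ∈ range N, stirlingSecond n k • f k = ∑ k ∈ range (n + 1), stirlingSecond n k • f k := by
  refine (sum_subset (range_subset_range.2 h) fun k _ hkn => ?_).symm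
  rw [stirlingSecond_eq_zero_of_lt (by simpa using hkn), zero_smul]

theorem sum_stirlingSecond_mul_descPochhammer_eval {R : Type*} [CommRing R] (n : ℕ) (x : R) :
    ∑ k ∈ range (n + 1), (stirlingSecond n k : R) * (descPochhammer R k).eval x = x ^ n := by
  induction n with
  | zero => simp
  | succ n ih =>
    set d : ℕ → R := fun k => (descPochhammer R k).eval x
    have hshift : ∑ k ∈ range (n + 1), ((k + 1 : ℕ) : R) * stirlingSecond n (k + 1) * d (k + 1) =
        ∑ k ∈ range (n + 1), (k : R) * stirlingSecond n k * d k := by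
      rw [← add_zero (∑ k ∈ range (n + 1), _), sum_range_succ, sum_range_succ',
        stirlingSecond_eq_zero_of_lt n.lt_succ_self]
      simp
    calc ∑ k ∈ range (n + 2), (stirlingSecond (n + 1) k : R) * d k
        = ∑ k ∈ range (n + 1), (((k + 1 : ℕ) : R) * stirlingSecond n (k + 1) * d (k + 1)
            + stirlingSecond n k * d (k + 1)) := by
          rw [sum_range_succ']
          simp only [stirlingSecond_succ_succ, stirlingSecond_succ_zero]
          push_cast
          simp [add_mul, mul_assoc]
      _ = ∑ k ∈ range (n + 1), (stirlingSecond n k : R) * (d k * x) := by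
          -- `(x)ₖ * x = (x)ₖ₊₁ + k * (x)ₖ`
          rw [sum_add_distrib, hshift, ← sum_add_distrib]
          refine sum_congr rfl fun k _ => ?_
          simp only [d, descPochhammer_succ_eval]
          ring
      _ = x ^ (n + 1) := by simp_rw [← mul_assoc, ← sum_mul, pow_succ, ← ih]; rfl

theorem descPochhammer_eval_neg_one {R : Type*} [Ring R] (k : ℕ) :
    (descPochhammer R k).eval (-1) = (-1) ^ k * k ! := by
  induction k with
  | zero => simp
  | succ k ih =>
    rw [descPochhammer_succ_eval, ih, pow_succ, factorial_succ, cast_mul, mul_assoc,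
      (cast_commute _ _).eq, cast_succ]
    noncomm_ring

theorem sum_neg_one_pow_mul_factorial_mul_stirlingSecond {R : Type*} [CommRing R] (n : ℕ) :
    ∑ k ∈ range (n + 1), (-1 : R) ^ k * k ! * stirlingSecond n k = (-1) ^ n := by
  rw [← sum_stirlingSecond_mul_descPochhammer_eval n (-1 : R)]
  refine sum_congr rfl fun k _ => ?_
  rw [descPochhammer_eval_neg_one, mul_comm]

end Nat

theorem stmt10_general (n : ℕ) :
    2 * ∑ k ∈ range (n / 2 + 1), ((2 * k + 1).factorial * S n (2 * k + 1) : ℤ) =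
      (B n : ℤ) - (-1) ^ n := by
  rw [B, S_eq_stirlingSecond]
  calc 2 * ∑ k ∈ range (n / 2 + 1), ((2 * k + 1)! * Nat.stirlingSecond n (2 * k + 1) : ℤ)
      = ∑ k ∈ range (2 * (n / 2 + 1)), Nat.stirlingSecond n k • ((1 - (-1) ^ k) * k ! : ℤ) := by
        rw [sum_range_two_mul, mul_sum]
        refine sum_congr rfl fun k _ => ?_
        simp only [pow_succ, pow_mul, nsmul_eq_mul]
        ring
    _ = ∑ k ∈ range (n + 1), Nat.stirlingSecond n k • ((1 - (-1) ^ k) * k ! : ℤ) :=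
        Nat.sum_range_stirlingSecond_smul_of_lt (by omega) _
    _ = ∑ k ∈ range (n + 1), (k ! * Nat.stirlingSecond n k : ℤ) - (-1) ^ n := by
        rw [← Nat.sum_neg_one_pow_mul_factorial_mul_stirlingSecond n, ← sum_sub_distrib]
        refine sum_congr rfl fun k _ => ?_
        rw [nsmul_eq_mul]
        ring
    _ = _ := by push_cast; rfl

theorem stmt10 (n : ℕ) (hn : 1 ≤ n) :
    2 * ∑ k ∈ range (n / 2 + 1), ((2 * k + 1).factorial * S n (2 * k + 1) : ℤ) =
      (B n : ℤ) - (-1) ^ n :=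
  stmt10_general n
end

section
/- For every integer n ≥ 2, the even-index weighted sum Σ_{k=1}^{⌊n/2⌋} (2k-1)!·S(n,2k) equals the odd-index weighted sum Σ_{k=0}^{⌊n/2⌋} (2k)!·S(n,2k+1). -/
/-!
The recurrence of `S` gives `(j-1)! S n j = g j + g (j-1)` with `g j = j! S (n-1) j`. So the
left side is `∑ (g (2k-1) + g (2k))` and the right side `∑ (g (2k) + g (2k+1))`: both sum `g`
over consecutive pairs, and since `g 0 = 0` and `g j = 0` for `j ≥ n` both equal
`∑ j, g j = B (n-1)`.
-/

open Finset

lemma S_succ_succ (n k : ℕ) : S (n + 1) (k + 1) = (k + 1) * S n (k + 1) + S n k := rfl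

lemma S_zero_right_of_pos : ∀ {n : ℕ}, 0 < n → S n 0 = 0
  | _ + 1, _ => rfl

lemma S_eq_zero_of_lt : ∀ {n k : ℕ}, n < k → S n k = 0
  | 0, _ + 1, _ => rfl
  | n + 1, k + 1, h => by
    rw [S_succ_succ, S_eq_zero_of_lt (by omega : n < k + 1), S_eq_zero_of_lt (by omega : n < k),
      mul_zero]

lemma factorial_mul_S_succ_succ (n k : ℕ) :
    k.factorial * S (n + 1) (k + 1) =
      (k + 1).factorial * S n (k + 1) + k.factorial * S n k := by
  rw [S_succ_succ, Nat.factorial_succ]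
  ring

lemma sum_range_two_mul_eq_sum_pairs {M : Type*} [AddCommMonoid M] (f : ℕ → M) (K : ℕ) :
    ∑ j ∈ range (2 * K), f j = ∑ k ∈ range K, (f (2 * k) + f (2 * k + 1)) := by
  induction K with
  | zero => simp
  | succ K ih =>
    rw [mul_add, mul_one, sum_range_succ, sum_range_succ, sum_range_succ, ih, add_assoc]

theorem stmt11 (n : ℕ) (hn : 2 ≤ n) :
    ∑ k ∈ Icc 1 (n / 2), (2 * k - 1).factorial * S n (2 * k) =
      ∑ k ∈ range (n / 2 + 1), (2 * k).factorial * S n (2 * k + 1) := by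
  obtain ⟨m, rfl⟩ : ∃ m, n = m + 1 := ⟨n - 1, by omega⟩
  set K := (m + 1) / 2
  set g : ℕ → ℕ := fun j => j.factorial * S m j
  have hg_zero : g 0 = 0 := by simp [g, S_zero_right_of_pos (by omega : 0 < m)]
  have hg_top : g (2 * K + 1) = 0 := by simp [g, S_eq_zero_of_lt (by omega : m < 2 * K + 1)]
  have h_even : ∑ k ∈ Icc 1 K, (2 * k - 1).factorial * S (m + 1) (2 * k) =
      ∑ j ∈ range (2 * K + 1), g j := by
    rw [← Ico_add_one_right_eq_Icc, sum_Ico_eq_sum_range, Nat.add_sub_cancel, sum_range_succ',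
      hg_zero, add_zero, sum_range_two_mul_eq_sum_pairs]
    refine sum_congr rfl fun k _ => ?_
    rw [show 2 * (1 + k) = 2 * k + 1 + 1 by ring, Nat.add_sub_cancel, factorial_mul_S_succ_succ]
    ring
  have h_odd : ∑ k ∈ range (K + 1), (2 * k).factorial * S (m + 1) (2 * k + 1) =
      ∑ j ∈ range (2 * K + 1), g j := by
    rw [← add_zero (∑ j ∈ range (2 * K + 1), g j), ← hg_top, ← sum_range_succ,
      show 2 * K + 1 + 1 = 2 * (K + 1) by ring, sum_range_two_mul_eq_sum_pairs]
    refine sum_congr rfl fun k _ => ?_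
    rw [factorial_mul_S_succ_succ]
    ring
  rw [h_even, h_odd]
end
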